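/- For every nonnegative integer n, Σ_{k=0}^n k H_{n+k} = (n(n+1)/2) H_n + n(n+1)/4. -/

import Mathlib

/-- Generalized harmonic number `H n m = ∑_{k=1}^n 1/k^m` (order `m : ℤ`), as a rational. -/
def H (n : ℕ) (m : ℤ) : ℚ := ∑ k ∈ Finset.range n, ((k : ℚ) + 1) ^ (-m)

lemma H_succ_one (n : ℕ) : H (n + 1) 1 = H n 1 + 1 / ((n : ℚ) + 1) := by
  simp [H, Finset.sum_range_succ, one_div]

lemma H_add (n m : ℕ) (s : ℤ) :
    H (n + m) s = H n s + ∑ k ∈ Finset.range m, ((n : ℚ) + k + 1) ^ (-s) := by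
  simp [H, Finset.sum_range_add]

lemma sum_range_div_add_succ (n m : ℕ) :
    ∑ k ∈ Finset.range m, (k : ℚ) / (n + k + 1) = m - (n + 1) * (H (n + m) 1 - H n 1) := by
  have hsplit : ∀ k ∈ Finset.range m,
      (k : ℚ) / (n + k + 1) = 1 - (n + 1) * ((n : ℚ) + k + 1) ^ (-1 : ℤ) := by
    intro k _
    field_simp
    ring
  rw [Finset.sum_congr rfl hsplit, Finset.sum_sub_distrib, ← Finset.mul_sum, H_add]
  simp

/-- Raising `n` by one adds `k / (n + k + 1)` to the `k`-th term; these corrections sum to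
`n + 2 - (n + 1) (H_{2n+2} - H_n)`, leaving `(n + 1) H_n + n + 3/2` after the new last term. -/
lemma sum_mul_H_shift_succ (n : ℕ) :
    ∑ k ∈ Finset.range (n + 2), (k : ℚ) * H (n + 1 + k) 1
      = ∑ k ∈ Finset.range (n + 1), (k : ℚ) * H (n + k) 1 + (n + 1) * H n 1 + n + 3 / 2 := by
  have hterm : ∀ k ∈ Finset.range (n + 2),
      (k : ℚ) * H (n + 1 + k) 1 = k * H (n + k) 1 + k / (n + k + 1) := by
    intro k _
    rw [show n + 1 + k = n + k + 1 by omega, H_succ_one]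
    push_cast
    ring
  rw [Finset.sum_congr rfl hterm, Finset.sum_add_distrib, sum_range_div_add_succ,
    Finset.sum_range_succ _ (n + 1), show n + (n + 2) = 2 * n + 1 + 1 by omega, H_succ_one,
    show n + (n + 1) = 2 * n + 1 by omega]
  push_cast
  field_simp
  ring

theorem sum_k_harmonic_shifted (n : ℕ) :
    ∑ k ∈ Finset.range (n + 1), (k : ℚ) * H (n + k) 1
      = ((n : ℚ) * ((n : ℚ) + 1) / 2) * H n 1 + (n : ℚ) * ((n : ℚ) + 1) / 4 := by
  induction n with
  | zero => simp [H]
  | succ n ih =>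
    rw [sum_mul_H_shift_succ, ih, H_succ_one]
    push_cast
    field_simp
    ring
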